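/- arXiv:2404.04133 — 9 statements merged into one kernel-verified Lean document; each statement's English description precedes it below -/
import Mathlib

section
/- Let p, q, r be natural numbers and let c_0, c_1, …, c_p be real numbers satisfying the normalization ∑_{l=0}^{p} c_l² = 1 and the recursion c_{l+1}² = ((p − l)(q + l + 1))/((l + 1)(p + r − l)) · c_l² for all 0 ≤ l ≤ p − 1. Set ε = p(q + 1)/(r + 1). Then c_l² ≤ ε^l · c_0² for all 0 ≤ l ≤ p, and 1 − c_0² ≤ ε. -/
/-!
Each ratio `c_{l+1}² / c_l²` is at most `ε`, factor by factor: `p - l ≤ p`,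
`q + l + 1 ≤ (q + 1)(l + 1)` and `r + 1 ≤ p + r - l`. Iterating gives `c_l² ≤ ε^l c_0²`, and
summing gives `1 - c_0² = ∑_{l<p} c_{l+1}² ≤ ε ∑_{l<p} c_l² ≤ ε`.
-/

open Finset

lemma le_pow_mul_of_succ_le_mul {a : ℕ → ℝ} {ε : ℝ} {n : ℕ} (hε : 0 ≤ ε)
    (h : ∀ l < n, a (l + 1) ≤ ε * a l) : ∀ l ≤ n, a l ≤ ε ^ l * a 0 := by
  intro l
  induction l with
  | zero => simp
  | succ l ih =>
    intro hl
    calc a (l + 1) ≤ ε * a l := h l hl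
      _ ≤ ε * (ε ^ l * a 0) := mul_le_mul_of_nonneg_left (ih (Nat.le_of_succ_le hl)) hε
      _ = ε ^ (l + 1) * a 0 := by ring

lemma one_sub_le_of_succ_le_mul {a : ℕ → ℝ} {ε : ℝ} {n : ℕ} (hε : 0 ≤ ε)
    (ha : ∀ l, 0 ≤ a l) (hsum : ∑ l ∈ range (n + 1), a l = 1)
    (h : ∀ l < n, a (l + 1) ≤ ε * a l) : 1 - a 0 ≤ ε := by
  have htail : 1 - a 0 = ∑ l ∈ range n, a (l + 1) := by
    rw [← hsum, sum_range_succ', add_sub_cancel_right]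
  calc 1 - a 0 = ∑ l ∈ range n, a (l + 1) := htail
    _ ≤ ∑ l ∈ range n, ε * a l := sum_le_sum fun l hl => h l (mem_range.mp hl)
    _ = ε * ∑ l ∈ range n, a l := (mul_sum _ _ _).symm
    _ ≤ ε * ∑ l ∈ range (n + 1), a l := by
      gcongr
      · exact fun i _ _ => ha i
      · exact n.le_succ
    _ = ε := by rw [hsum, mul_one]

lemma clebschGordan_ratio_le (p q r l : ℕ) (hl : l < p) :
    (((p : ℝ) - l) * ((q : ℝ) + l + 1)) / (((l : ℝ) + 1) * ((p : ℝ) + r - l)) ≤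
      (p : ℝ) * ((q : ℝ) + 1) / ((r : ℝ) + 1) := by
  have hlp : (l : ℝ) + 1 ≤ p := by exact_mod_cast hl
  have hq : (0 : ℝ) ≤ q := q.cast_nonneg
  have hl0 : (0 : ℝ) ≤ l := l.cast_nonneg
  rw [div_le_div_iff₀ (by nlinarith) (by positivity)]
  calc ((p : ℝ) - l) * ((q : ℝ) + l + 1) * ((r : ℝ) + 1)
      ≤ (p : ℝ) * (((q : ℝ) + 1) * ((l : ℝ) + 1)) * ((p : ℝ) + r - l) := by
        gcongr ?_ * ?_ * ?_
        · linarith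
        · nlinarith
        · linarith
    _ = (p : ℝ) * ((q : ℝ) + 1) * (((l : ℝ) + 1) * ((p : ℝ) + r - l)) := by ring

/-- Abstract bound on Clebsch–Gordan-type coefficients: given the normalization
`∑_{l=0}^p c_l² = 1` and the recursion
`c_{l+1}² = ((p-l)(q+l+1))/((l+1)(p+r-l)) · c_l²`, with `ε = p(q+1)/(r+1)`,
we have `c_l² ≤ ε^l c_0²` for all `l ≤ p` and `1 - c_0² ≤ ε`. -/
theorem stmt0 (p q r : ℕ) (c : ℕ → ℝ)
    (hnorm : ∑ l ∈ Finset.range (p + 1), (c l) ^ 2 = 1)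
    (hrec : ∀ l, l < p →
      (c (l + 1)) ^ 2 =
        (((p : ℝ) - l) * ((q : ℝ) + l + 1)) / (((l : ℝ) + 1) * ((p : ℝ) + r - l)) * (c l) ^ 2) :
    (∀ l ≤ p, (c l) ^ 2 ≤ ((p : ℝ) * ((q : ℝ) + 1) / ((r : ℝ) + 1)) ^ l * (c 0) ^ 2) ∧
      1 - (c 0) ^ 2 ≤ (p : ℝ) * ((q : ℝ) + 1) / ((r : ℝ) + 1) := by
  have hε : (0 : ℝ) ≤ (p : ℝ) * ((q : ℝ) + 1) / ((r : ℝ) + 1) := by positivity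
  have hstep : ∀ l < p,
      (c (l + 1)) ^ 2 ≤ (p : ℝ) * ((q : ℝ) + 1) / ((r : ℝ) + 1) * (c l) ^ 2 := fun l hl => by
    rw [hrec l hl]
    exact mul_le_mul_of_nonneg_right (clebschGordan_ratio_le p q r l hl) (sq_nonneg _)
  exact ⟨le_pow_mul_of_succ_le_mul hε hstep,
    one_sub_le_of_succ_le_mul hε (fun l => sq_nonneg (c l)) hnorm hstep⟩
end

section
/- For natural numbers n and ℓ with ℓ ≤ n, ∫_{−1}^{1} ((1 + x)/2)^n · P_ℓ(x) dx = 2 · (n!)² / ((n − ℓ)! · (n + ℓ + 1)!), where P_ℓ is the ℓ-th Legendre polynomial, given by the Rodrigues formula P_ℓ(x) = (1/(2^ℓ · ℓ!)) · (d/dx)^ℓ (x² − 1)^ℓ. -/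
open intervalIntegral

noncomputable def legendreP (ℓ : ℕ) (x : ℝ) : ℝ :=
  (1 / (2 ^ ℓ * (Nat.factorial ℓ : ℝ))) * iteratedDeriv ℓ (fun y : ℝ => (y ^ 2 - 1) ^ ℓ) x

/-!
Write `P_ℓ` through the polynomial `(X² - 1)^ℓ`, whose derivatives of order `< ℓ` vanish at `±1`.
Then `ℓ` integrations by parts move every derivative onto `(1 + x)^n` without boundary terms, and
since `x² - 1 = -(1 + x)(1 - x)` what remains is the Beta integral
`∫_{-1}^1 (1 + x)^n (1 - x)^ℓ dx = 2^(n+ℓ+1) n! ℓ! / (n + ℓ + 1)!`.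
-/

open Nat

theorem integral_sub_pow_mul_sub_pow (c d : ℝ) (a b : ℕ) :
    ∫ x in c..d, (x - c) ^ a * (d - x) ^ b = (d - c) ^ (a + b + 1) * a ! * b ! / (a + b + 1)! := by
  induction b generalizing a with
  | zero =>
    simp only [pow_zero, mul_one, add_zero, factorial_zero, cast_one, integral_comp_sub_right
      fun x => x ^ a, sub_self, integral_pow]
    rw [factorial_succ]
    push_cast
    field_simp
    ring
  | succ b ih =>
    have hu : ∀ x ∈ Set.uIcc c d, HasDerivAt (fun x => (d - x) ^ (b + 1))
        (-((b + 1) * (d - x) ^ b)) x := fun x _ => by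
      simpa using ((hasDerivAt_id x).const_sub d).fun_pow (b + 1)
    have hv : ∀ x ∈ Set.uIcc c d, HasDerivAt (fun x => (x - c) ^ (a + 1) / (a + 1))
        ((x - c) ^ a) x := fun x _ => by
      refine ((((hasDerivAt_id' x).sub_const c).fun_pow (a + 1)).div_const _).congr_deriv ?_
      push_cast
      field_simp
    have ibp := integral_mul_deriv_eq_deriv_mul hu hv
      ((by fun_prop : Continuous _).intervalIntegrable _ _)
      ((by fun_prop : Continuous _).intervalIntegrable _ _)
    simp only [sub_self, zero_pow (succ_ne_zero _), zero_div, mul_zero, zero_mul] at ibp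
    calc ∫ x in c..d, (x - c) ^ a * (d - x) ^ (b + 1)
        = ∫ x in c..d, (d - x) ^ (b + 1) * (x - c) ^ a := by simp_rw [mul_comm]
      _ = (b + 1) / (a + 1) * ∫ x in c..d, (x - c) ^ (a + 1) * (d - x) ^ b := by
        rw [ibp, zero_sub, ← integral_neg, ← integral_const_mul]
        congr 1 with x
        field_simp
      _ = _ := by
        rw [ih, show a + 1 + b + 1 = a + (b + 1) + 1 by ring, factorial_succ a, factorial_succ b]
        push_cast
        field_simp

namespace Polynomial

theorem iteratedDeriv_eval (p : ℝ[X]) (k : ℕ) :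
    iteratedDeriv k (fun x => p.eval x) = fun x => (derivative^[k] p).eval x := by
  induction k with
  | zero => simp
  | succ k ih =>
    rw [iteratedDeriv_succ, ih, Function.iterate_succ_apply']
    funext x
    exact Polynomial.deriv _

theorem isRoot_iterate_derivative_of_pow_dvd {R : Type*} [CommRing R] {p : R[X]} {t : R}
    {k m : ℕ} (hp : (X - C t) ^ k ∣ p) (hm : m < k) : (derivative^[m] p).IsRoot t :=
  dvd_iff_isRoot.mp <| (dvd_pow_self _ (Nat.sub_ne_zero_of_lt hm)).trans
    (pow_sub_dvd_iterate_derivative_of_pow_dvd m hp)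

theorem eval_iterate_derivative_X_sq_sub_one_pow {R : Type*} [CommRing R] {ℓ m : ℕ} (hm : m < ℓ)
    {t : R} (ht : t ^ 2 = 1) : (derivative^[m] ((X ^ 2 - 1 : R[X]) ^ ℓ)).eval t = 0 :=
  isRoot_iterate_derivative_of_pow_dvd
    (pow_dvd_pow_of_dvd (dvd_iff_isRoot.mpr (by simp [ht])) ℓ) hm

theorem integral_eval_mul_eval_derivative (p q : ℝ[X]) (a b : ℝ) :
    ∫ x in a..b, p.eval x * (derivative q).eval x =
      p.eval b * q.eval b - p.eval a * q.eval a -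
        ∫ x in a..b, (derivative p).eval x * q.eval x :=
  integral_mul_deriv_eq_deriv_mul (fun x _ => p.hasDerivAt x) (fun x _ => q.hasDerivAt x)
    ((derivative p).continuous.intervalIntegrable _ _)
    ((derivative q).continuous.intervalIntegrable _ _)

theorem integral_eval_mul_eval_iterate_derivative {q : ℝ[X]} {a b : ℝ} {k : ℕ}
    (ha : ∀ m < k, (derivative^[m] q).eval a = 0) (hb : ∀ m < k, (derivative^[m] q).eval b = 0)
    (p : ℝ[X]) :
    ∫ x in a..b, p.eval x * (derivative^[k] q).eval x =
      (-1) ^ k * ∫ x in a..b, (derivative^[k] p).eval x * q.eval x := by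
  induction k generalizing p with
  | zero => simp
  | succ k ih =>
    rw [Function.iterate_succ_apply' derivative, integral_eval_mul_eval_derivative,
      ha k k.lt_succ_self, hb k k.lt_succ_self,
      ih (fun m hm => ha m (hm.trans k.lt_succ_self)) (fun m hm => hb m (hm.trans k.lt_succ_self)),
      ← Function.iterate_succ_apply]
    ring

end Polynomial

open Polynomial

theorem legendreP_eq_eval_iterate_derivative (ℓ : ℕ) :
    legendreP ℓ =
      fun x => (2 ^ ℓ * (ℓ ! : ℝ))⁻¹ * (derivative^[ℓ] ((X ^ 2 - 1 : ℝ[X]) ^ ℓ)).eval x := by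
  have : (fun y : ℝ => (y ^ 2 - 1) ^ ℓ) = fun y => ((X ^ 2 - 1 : ℝ[X]) ^ ℓ).eval y := by simp
  ext x
  rw [legendreP, this, iteratedDeriv_eval, one_div]

theorem integral_add_one_pow_mul_eval_rodrigues {n ℓ : ℕ} (h : ℓ ≤ n) :
    ∫ x in (-1 : ℝ)..1, (x + 1) ^ n * (derivative^[ℓ] ((X ^ 2 - 1 : ℝ[X]) ^ ℓ)).eval x =
      n.descFactorial ℓ * (2 ^ (n + ℓ + 1) * n ! * ℓ ! / (n + ℓ + 1)!) := by
  have hroot (t : ℝ) (ht : t ^ 2 = 1) (m : ℕ) (hm : m < ℓ) :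
      (derivative^[m] ((X ^ 2 - 1 : ℝ[X]) ^ ℓ)).eval t = 0 :=
    eval_iterate_derivative_X_sq_sub_one_pow hm ht
  have hibp := integral_eval_mul_eval_iterate_derivative (hroot (-1) (by norm_num))
    (hroot 1 (by norm_num)) ((X + C 1) ^ n)
  simp only [eval_pow, eval_add, eval_X, eval_C, eval_sub, eval_one,
    iterate_derivative_X_add_pow, nsmul_eq_mul, eval_mul, eval_natCast] at hibp
  have hpoint (x : ℝ) : (-1) ^ ℓ * (n.descFactorial ℓ * (x + 1) ^ (n - ℓ) * (x ^ 2 - 1) ^ ℓ) =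
      n.descFactorial ℓ * ((x - -1) ^ n * (1 - x) ^ ℓ) := by
    rw [sub_neg_eq_add, ← pow_sub_mul_pow (x + 1) h, mul_assoc _ _ ((1 - x) ^ ℓ), ← mul_pow,
      show (x + 1) * (1 - x) = -1 * (x ^ 2 - 1) by ring, mul_pow]
    ring
  rw [hibp, ← integral_const_mul]
  simp_rw [hpoint]
  rw [integral_const_mul, integral_sub_pow_mul_sub_pow]
  norm_num

/-- `∫_{-1}^1 ((1+x)/2)^n P_ℓ(x) dx = 2 (n!)² / ((n-ℓ)! (n+ℓ+1)!)` for `ℓ ≤ n`. -/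
theorem stmt1 (n ℓ : ℕ) (h : ℓ ≤ n) :
    ∫ x in (-1 : ℝ)..1, ((1 + x) / 2) ^ n * legendreP ℓ x =
      2 * (Nat.factorial n : ℝ) ^ 2 /
        ((Nat.factorial (n - ℓ) : ℝ) * (Nat.factorial (n + ℓ + 1) : ℝ)) := by
  have hpoint (x : ℝ) : ((1 + x) / 2) ^ n * legendreP ℓ x = (2 ^ n * (2 ^ ℓ * (ℓ ! : ℝ)))⁻¹ *
      ((x + 1) ^ n * (derivative^[ℓ] ((X ^ 2 - 1 : ℝ[X]) ^ ℓ)).eval x) := by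
    rw [legendreP_eq_eval_iterate_derivative, div_pow, add_comm 1 x]
    field_simp
  simp_rw [hpoint]
  rw [integral_const_mul, integral_add_one_pow_mul_eval_rodrigues h,
    ← factorial_mul_descFactorial h]
  push_cast
  field_simp
  ring
end

section
/- For all natural numbers n and ℓ with ℓ ≤ n: 0 ≤ 1 − (n! · (n+1)!) / ((n − ℓ)! · (n + ℓ + 1)!) ≤ ℓ(ℓ + 1)/(n + ℓ + 1). -/
/-!
Writing `n! / (n-ℓ)!` and `(n+ℓ+1)! / (n+1)!` as products, the ratio is
`r ℓ = ∏_{j<ℓ} (n-j)/(n+j+2)`, a product of factors in `[0, 1]`, whence `r ℓ ≤ 1`.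
For the upper bound, `r (ℓ+1) = r ℓ * c` with `c = (n-ℓ)/(n+ℓ+2)`, so
`1 - r (ℓ+1) = (1 - r ℓ) * c + (1 - c)` with `1 - c = 2(ℓ+1)/(n+ℓ+2)`, and induction closes
because `ℓ(ℓ+1)/(n+ℓ+1) * c ≤ ℓ(ℓ+1)/(n+ℓ+2)`.
-/

open Finset Nat

noncomputable def berezinFactor (x : ℝ) (ℓ : ℕ) : ℝ :=
  ∏ j ∈ range ℓ, (x - j) / (x + j + 2)

lemma berezinFactor_succ (x : ℝ) (ℓ : ℕ) :
    berezinFactor x (ℓ + 1) = berezinFactor x ℓ * ((x - ℓ) / (x + ℓ + 2)) :=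
  prod_range_succ _ _

lemma berezinFactor_le_one {x : ℝ} {ℓ : ℕ} (hℓ : (ℓ : ℝ) ≤ x + 1) :
    berezinFactor x ℓ ≤ 1 := by
  have hfactor : ∀ j ∈ range ℓ, 0 ≤ x - j ∧ x - j ≤ x + j + 2 := by
    intro j hj
    have : (j : ℝ) + 1 ≤ ℓ := by exact_mod_cast mem_range.mp hj
    constructor <;> linarith [j.cast_nonneg (α := ℝ)]
  exact prod_le_one (fun j hj => div_nonneg (hfactor j hj).1 (by linarith [hfactor j hj]))
    fun j hj => div_le_one_of_le₀ (hfactor j hj).2 (by linarith [hfactor j hj])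

lemma one_sub_berezinFactor_le {x : ℝ} {ℓ : ℕ} (hℓ : (ℓ : ℝ) ≤ x + 1) :
    1 - berezinFactor x ℓ ≤ ℓ * (ℓ + 1) / (x + ℓ + 1) := by
  induction ℓ with
  | zero => simp [berezinFactor]
  | succ ℓ ih =>
    push_cast at hℓ ⊢
    have hxℓ : (ℓ : ℝ) ≤ x := by linarith
    set r := berezinFactor x ℓ
    set c := (x - ℓ) / (x + ℓ + 2)
    have hd1 : 0 < x + ℓ + 1 := by linarith
    have hd2 : 0 < x + ℓ + 2 := by linarith
    have hc : 0 ≤ c := div_nonneg (by linarith) hd2.le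
    have hrc : 1 - r * c = (1 - r) * c + 2 * (ℓ + 1) / (x + ℓ + 2) := by
      simp only [c]; field_simp; ring
    have hstep : ℓ * (ℓ + 1) / (x + ℓ + 1) * c ≤ ℓ * (ℓ + 1) / (x + ℓ + 2) := by
      calc ℓ * (ℓ + 1) / (x + ℓ + 1) * c
          = ℓ * (ℓ + 1) / (x + ℓ + 2) * ((x - ℓ) / (x + ℓ + 1)) := by
            simp only [c]; field_simp
        _ ≤ ℓ * (ℓ + 1) / (x + ℓ + 2) :=
            mul_le_of_le_one_right (by positivity) (div_le_one_of_le₀ (by linarith) hd1.le)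
    calc 1 - berezinFactor x (ℓ + 1) = (1 - r) * c + 2 * (ℓ + 1) / (x + ℓ + 2) := by
          rw [berezinFactor_succ, hrc]
      _ ≤ ℓ * (ℓ + 1) / (x + ℓ + 1) * c + 2 * (ℓ + 1) / (x + ℓ + 2) := by
          gcongr; exact ih (by linarith)
      _ ≤ ℓ * (ℓ + 1) / (x + ℓ + 2) + 2 * (ℓ + 1) / (x + ℓ + 2) := by gcongr
      _ = (ℓ + 1) * (ℓ + 1 + 1) / (x + (ℓ + 1) + 1) := by
          rw [← add_div]; congr 1 <;> ring

lemma factorial_ratio_eq_berezinFactor {n ℓ : ℕ} (h : ℓ ≤ n) :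
    (n ! * (n + 1)! : ℝ) / ((n - ℓ)! * (n + ℓ + 1)!) = berezinFactor n ℓ := by
  have hdesc : (n ! : ℝ) = (n - ℓ)! * ∏ j ∈ range ℓ, ((n : ℝ) - j) := by
    rw [← Nat.factorial_mul_descFactorial h, Nat.descFactorial_eq_prod_range]
    push_cast
    congr 1
    refine prod_congr rfl fun j hj => Nat.cast_sub ?_
    exact (mem_range.mp hj).le.trans h
  have hasc : ((n + ℓ + 1)! : ℝ) = (n + 1)! * ∏ j ∈ range ℓ, ((n : ℝ) + j + 2) := by
    rw [show n + ℓ + 1 = n + 1 + ℓ by ring, ← Nat.factorial_mul_ascFactorial,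
      Nat.ascFactorial_eq_prod_range]
    push_cast
    congr 1
    exact prod_congr rfl fun j _ => by ring
  rw [hdesc, hasc, berezinFactor, prod_div_distrib]
  field_simp

/-- For `ℓ ≤ n`: `0 ≤ 1 - n!(n+1)!/((n-ℓ)!(n+ℓ+1)!) ≤ ℓ(ℓ+1)/(n+ℓ+1)`. -/
theorem stmt2 (n ℓ : ℕ) (h : ℓ ≤ n) :
    0 ≤ 1 - (Nat.factorial n : ℝ) * (Nat.factorial (n + 1)) /
          ((Nat.factorial (n - ℓ) : ℝ) * (Nat.factorial (n + ℓ + 1))) ∧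
    1 - (Nat.factorial n : ℝ) * (Nat.factorial (n + 1)) /
          ((Nat.factorial (n - ℓ) : ℝ) * (Nat.factorial (n + ℓ + 1))) ≤
        (ℓ : ℝ) * ((ℓ : ℝ) + 1) / ((n : ℝ) + ℓ + 1) := by
  have hℓ : (ℓ : ℝ) ≤ n + 1 := by exact_mod_cast h.trans n.le_succ
  rw [factorial_ratio_eq_berezinFactor h]
  exact ⟨sub_nonneg.mpr (berezinFactor_le_one hℓ), one_sub_berezinFactor_le hℓ⟩
end

section
/- For all natural numbers n and m with m ≤ n: ∑_{ℓ=m}^{n} (2ℓ + 1) · n!(n+1)! / ((n − ℓ)! · (n + ℓ + 1)!) = n!(n+1)! / ((n − m)! · (n + m)!). -/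
open Finset Nat

/-- The summand is a difference of consecutive terms of `ℓ ↦ 1 / ((n - ℓ)! (n + ℓ)!)`,
since `(n + ℓ + 1) - (n - ℓ) = 2ℓ + 1`. -/
lemma two_mul_add_one_div_factorial_add_one_div_factorial {n ℓ : ℕ} (h : ℓ < n) :
    (2 * (ℓ : ℝ) + 1) / ((n - ℓ)! * (n + ℓ + 1)!) + 1 / ((n - (ℓ + 1))! * (n + (ℓ + 1))!) =
      1 / ((n - ℓ)! * (n + ℓ)!) := by
  obtain ⟨j, rfl⟩ := Nat.exists_eq_add_of_lt h
  rw [show ℓ + j + 1 - ℓ = j + 1 by omega, show ℓ + j + 1 - (ℓ + 1) = j by omega,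
    show ℓ + j + 1 + (ℓ + 1) = ℓ + j + 1 + ℓ + 1 by omega, factorial_succ j,
    factorial_succ (ℓ + j + 1 + ℓ)]
  have : (j ! : ℝ) ≠ 0 := by positivity
  have : ((ℓ + j + 1 + ℓ)! : ℝ) ≠ 0 := by positivity
  push_cast
  field_simp
  ring

lemma sum_Icc_two_mul_add_one_div_factorial {n m : ℕ} (h : m ≤ n) :
    ∑ ℓ ∈ Icc m n, (2 * (ℓ : ℝ) + 1) / ((n - ℓ)! * (n + ℓ + 1)!) =
      1 / ((n - m)! * (n + m)!) := by
  induction h using Nat.decreasingInduction with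
  | self =>
    rw [Icc_self, sum_singleton, Nat.sub_self, factorial_succ (n + n)]
    have : ((n + n)! : ℝ) ≠ 0 := by positivity
    push_cast
    field_simp
    ring
  | of_succ ℓ hℓ ih =>
    rw [← insert_Icc_add_one_left_eq_Icc hℓ.le, sum_insert (by simp), ih,
      two_mul_add_one_div_factorial_add_one_div_factorial hℓ]

/-- For `m ≤ n`:
`∑_{ℓ=m}^n (2ℓ+1) n!(n+1)!/((n-ℓ)!(n+ℓ+1)!) = n!(n+1)!/((n-m)!(n+m)!)`. -/
theorem stmt6 (n m : ℕ) (h : m ≤ n) :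
    ∑ ℓ ∈ Finset.Icc m n,
        (2 * (ℓ : ℝ) + 1) * ((Nat.factorial n : ℝ) * (Nat.factorial (n + 1))) /
          ((Nat.factorial (n - ℓ) : ℝ) * (Nat.factorial (n + ℓ + 1))) =
      (Nat.factorial n : ℝ) * (Nat.factorial (n + 1)) /
        ((Nat.factorial (n - m) : ℝ) * (Nat.factorial (n + m))) := by
  simp_rw [mul_comm (2 * _ + 1 : ℝ), mul_div_assoc, ← mul_sum,
    sum_Icc_two_mul_add_one_div_factorial h, mul_one_div, mul_div_assoc]
end

section
/- For each fixed natural number ℓ, the sequence n ↦ n!(n+1)!/((n − ℓ)!(n + ℓ + 1)!), defined for n ≥ ℓ, is monotonically increasing in n and converges to 1 as n → ∞. -/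
/-!
For `ℓ ≤ n` the factorials telescope: `n!/(n-ℓ)!` and `(n+ℓ+1)!/(n+1)!` are falling and rising
factorials, so the ratio is `∏_{i<ℓ} (n-i)/(n+i+2)`. Each factor is nonnegative, increasing in
`n` and tends to `1`, hence so does the product.
-/

open Filter Finset Nat Topology

noncomputable def berezinEigenvalue (ℓ n : ℕ) : ℝ :=
  (n ! * (n + 1)! : ℝ) / ((n - ℓ)! * (n + ℓ + 1)!)

lemma sub_div_add_le_sub_div_add {a b x y : ℝ} (hab : 0 ≤ a + b) (hx : 0 < x + b)
    (hxy : x ≤ y) : (x - a) / (x + b) ≤ (y - a) / (y + b) := by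
  rw [div_le_div_iff₀ hx (by linarith)]
  nlinarith [mul_nonneg hab (sub_nonneg.2 hxy)]

lemma tendsto_sub_div_add_atTop (a b : ℝ) :
    Tendsto (fun x : ℝ => (x - a) / (x + b)) atTop (𝓝 1) := by
  have hden : Tendsto (fun x : ℝ => x + b) atTop atTop :=
    tendsto_atTop_add_const_right _ b tendsto_id
  have : Tendsto (fun x : ℝ => 1 - (a + b) / (x + b)) atTop (𝓝 1) := by
    simpa using tendsto_const_nhds.sub (tendsto_const_nhds.div_atTop hden)
  refine this.congr' ?_
  filter_upwards [hden.eventually_gt_atTop 0] with x hx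
  field_simp
  ring

lemma berezinEigenvalue_eq_prod {ℓ n : ℕ} (h : ℓ ≤ n) :
    berezinEigenvalue ℓ n = ∏ i ∈ range ℓ, ((n : ℝ) - i) / (n + (i + 2)) := by
  have hdesc : ((n - ℓ)! * n.descFactorial ℓ : ℝ) = n ! := by
    exact_mod_cast factorial_mul_descFactorial h
  have hasc : ((n + 1)! * (n + 2).ascFactorial ℓ : ℝ) = (n + ℓ + 1)! := by
    rw [show n + ℓ + 1 = n + 1 + ℓ by ring]
    exact_mod_cast factorial_mul_ascFactorial (n + 1) ℓ
  rw [berezinEigenvalue, prod_div_distrib, ← hdesc, ← hasc, descFactorial_eq_prod_range,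
    ascFactorial_eq_prod_range, Nat.cast_prod, Nat.cast_prod,
    prod_congr rfl fun i hi => Nat.cast_sub ((mem_range.1 hi).le.trans h)]
  have : ((n + 1)! : ℝ) ≠ 0 := by positivity
  have : ((n - ℓ)! : ℝ) ≠ 0 := by positivity
  field_simp
  push_cast
  ring_nf

lemma berezinEigenvalue_le_succ {ℓ n : ℕ} (h : ℓ ≤ n) :
    berezinEigenvalue ℓ n ≤ berezinEigenvalue ℓ (n + 1) := by
  rw [berezinEigenvalue_eq_prod h, berezinEigenvalue_eq_prod (h.trans n.le_succ)]
  refine prod_le_prod (fun i hi => ?_) (fun i _ => ?_)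
  · have : (i : ℝ) ≤ n := by exact_mod_cast (mem_range.1 hi).le.trans h
    exact div_nonneg (by linarith) (by positivity)
  · exact sub_div_add_le_sub_div_add (by positivity) (by positivity) (by push_cast; linarith)

lemma tendsto_berezinEigenvalue (ℓ : ℕ) : Tendsto (berezinEigenvalue ℓ) atTop (𝓝 1) := by
  have hfactor (i : ℕ) : Tendsto (fun n : ℕ => ((n : ℝ) - i) / (n + (i + 2))) atTop (𝓝 1) :=
    (tendsto_sub_div_add_atTop _ _).comp tendsto_natCast_atTop_atTop
  have := tendsto_finsetProd (range ℓ) fun i _ => hfactor i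
  rw [prod_const_one] at this
  exact this.congr' <| (eventually_ge_atTop ℓ).mono fun n h => (berezinEigenvalue_eq_prod h).symm

/-- For fixed `ℓ`, the sequence `n ↦ n!(n+1)!/((n-ℓ)!(n+ℓ+1)!)` (defined for `n ≥ ℓ`)
is monotonically increasing in `n` and converges to `1` as `n → ∞`. -/
theorem stmt8 (ℓ : ℕ) :
    (∀ n, ℓ ≤ n →
      (Nat.factorial n : ℝ) * (Nat.factorial (n + 1)) /
          ((Nat.factorial (n - ℓ) : ℝ) * (Nat.factorial (n + ℓ + 1))) ≤
        (Nat.factorial (n + 1) : ℝ) * (Nat.factorial (n + 2)) /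
          ((Nat.factorial (n + 1 - ℓ) : ℝ) * (Nat.factorial (n + 1 + ℓ + 1)))) ∧
    Filter.Tendsto
      (fun n : ℕ =>
        (Nat.factorial n : ℝ) * (Nat.factorial (n + 1)) /
          ((Nat.factorial (n - ℓ) : ℝ) * (Nat.factorial (n + ℓ + 1))))
      Filter.atTop (nhds 1) := by
  exact ⟨fun n hn => berezinEigenvalue_le_succ hn, tendsto_berezinEigenvalue ℓ⟩
end

section
/- For every integer N ≥ 1: ∑_{ℓ=N+1}^{∞} Γ(ℓ + 1/2)² / (π · ℓ! · (ℓ + 1)!) ≤ (1/π) · log(1 + 1/N). (Equivalently, ∑_{ℓ>N} ((1/2)_ℓ)²/(ℓ!(ℓ+1)!) ≤ (1/π)log(1+1/N), where (1/2)_ℓ = Γ(ℓ+1/2)/Γ(1/2) is the Pochhammer symbol.) -/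
/-!
Log-convexity of `Γ` gives `Γ(ℓ + 1/2)² ≤ Γ(ℓ) Γ(ℓ + 1) = (ℓ - 1)! ℓ!`, so the `ℓ`-th term is at most
`1 / (π ℓ (ℓ + 1)) = (1/ℓ - 1/(ℓ + 1)) / π`. The tail therefore telescopes to at most `1 / (π (N + 1))`,
and `1 / (N + 1) ≤ log (1 + 1/N)`.
-/

open Real Nat

theorem Real.Gamma_add_half_sq_le_Gamma_mul_Gamma_add_one {x : ℝ} (hx : 0 < x) :
    Gamma (x + 1 / 2) ^ 2 ≤ Gamma x * Gamma (x + 1) := by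
  have h := Gamma_mul_add_mul_le_rpow_Gamma_mul_rpow_Gamma hx (by linarith : 0 < x + 1)
    one_half_pos one_half_pos (add_halves 1)
  rw [← sqrt_eq_rpow, ← sqrt_eq_rpow, show 1 / 2 * x + 1 / 2 * (x + 1) = x + 1 / 2 by ring] at h
  calc Gamma (x + 1 / 2) ^ 2 ≤ (√(Gamma x) * √(Gamma (x + 1))) ^ 2 :=
        pow_le_pow_left₀ (Gamma_pos_of_pos (by linarith)).le h 2
    _ = Gamma x * Gamma (x + 1) := by
        rw [mul_pow, sq_sqrt (Gamma_pos_of_pos hx).le, sq_sqrt (Gamma_pos_of_pos (by linarith)).le]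

theorem Real.Gamma_add_half_sq_div_factorial_mul_factorial_le {n : ℕ} (hn : n ≠ 0) :
    Gamma (n + 1 / 2) ^ 2 / (n ! * (n + 1)! : ℝ) ≤ 1 / n - 1 / (n + 1) := by
  obtain ⟨m, rfl⟩ := exists_eq_add_one_of_ne_zero hn
  have h := Gamma_add_half_sq_le_Gamma_mul_Gamma_add_one (m.cast_add_one_pos (α := ℝ))
  have h₁ : Gamma ((m : ℝ) + 1) = m ! := Gamma_nat_eq_factorial m
  have h₂ : Gamma ((m : ℝ) + 1 + 1) = (m + 1)! := by exact_mod_cast Gamma_nat_eq_factorial (m + 1)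
  rw [h₁, h₂] at h
  calc Gamma ((m + 1 : ℕ) + 1 / 2) ^ 2 / ((m + 1)! * (m + 1 + 1)! : ℝ)
      ≤ m ! * (m + 1)! / ((m + 1)! * (m + 1 + 1)! : ℝ) := by gcongr; push_cast; exact h
    _ = 1 / (m + 1 : ℕ) - 1 / ((m + 1 : ℕ) + 1) := by
        push_cast [Nat.factorial_succ]
        field_simp
        ring

theorem tsum_le_of_le_sub_succ {f g : ℕ → ℝ} (hf : ∀ n, 0 ≤ f n)
    (hfg : ∀ n, f n ≤ g n - g (n + 1)) (hg : ∀ n, 0 ≤ g n) : ∑' n, f n ≤ g 0 :=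
  Real.tsum_le_of_sum_range_le hf fun n =>
    calc ∑ k ∈ Finset.range n, f k ≤ ∑ k ∈ Finset.range n, (g k - g (k + 1)) :=
          Finset.sum_le_sum fun k _ => hfg k
      _ = g 0 - g n := Finset.sum_range_sub' g n
      _ ≤ g 0 := sub_le_self _ (hg n)

theorem Real.one_div_add_one_le_log_one_add_one_div {x : ℝ} (hx : 0 < x) :
    1 / (x + 1) ≤ log (1 + 1 / x) := by
  have h := one_sub_inv_le_log_of_pos (by positivity : 0 < 1 + 1 / x)
  convert h using 1
  field_simp
  ring

/-- For `N ≥ 1`: `∑_{ℓ=N+1}^∞ Γ(ℓ+1/2)²/(π ℓ! (ℓ+1)!) ≤ (1/π) log(1 + 1/N)`. -/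
theorem stmt9 (N : ℕ) (hN : 1 ≤ N) :
    ∑' k : ℕ,
        Real.Gamma (((N + 1 + k : ℕ) : ℝ) + 1 / 2) ^ 2 /
          (Real.pi * (Nat.factorial (N + 1 + k) : ℝ) * (Nat.factorial (N + 1 + k + 1) : ℝ)) ≤
      (1 / Real.pi) * Real.log (1 + 1 / (N : ℝ)) := by
  have hg : ∀ k : ℕ, 0 ≤ 1 / π * (1 / ((N + 1 + k : ℕ) : ℝ)) := fun k => by positivity
  refine (tsum_le_of_le_sub_succ (fun k => by positivity) (fun k => ?_) hg).trans ?_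
  · calc _ = 1 / π * (Gamma (((N + 1 + k : ℕ) : ℝ) + 1 / 2) ^ 2 /
            ((N + 1 + k)! * (N + 1 + k + 1)! : ℝ)) := by ring
      _ ≤ 1 / π * (1 / ((N + 1 + k : ℕ) : ℝ) - 1 / ((N + 1 + k : ℕ) + 1)) := by
          gcongr; exact_mod_cast Gamma_add_half_sq_div_factorial_mul_factorial_le (by omega)
      _ = _ := by push_cast; ring
  · gcongr
    simpa using one_div_add_one_le_log_one_add_one_div (by exact_mod_cast hN : (0 : ℝ) < N)
end

section
/- For all integers m ≥ 2 and J ≥ m + 1: ∑_{i=0}^{2J−m} ((2J − m − i)! · i!) / ((2J − i)! · (i + m)!) ≤ 2 / ((m − 1) · (m − 1)! · (J − 1)(J − 2)⋯(J − m)). -/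
/-!
Writing `g i = i! / (i + m)!`, the `i`-th summand is `g (2J - m - i) * g i`. The two arguments
add up to `2J - m`, so one of them is at least `J - m - 1`, and there `g ≤ 1 / P` with
`P = (J - 1)(J - 2)⋯(J - m)`, since `(j + m)! / j!` is a falling factorial dominating `P`.
Hence each summand is at most `(g (2J - m - i) + g i) / P`, and the sum at most `2 / P` times
`∑ g i`, which telescopes to at most `1 / ((m - 1) (m - 1)!)`.
-/

open Finset Nat

lemma prod_Icc_sub_eq_descFactorial {R : Type*} [CommRing R] {m J : ℕ} (h : m ≤ J) :
    ∏ k ∈ Icc 1 m, ((J : R) - k) = ((J - 1).descFactorial m : R) := by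
  induction m with
  | zero => simp
  | succ m ih =>
    rw [prod_Icc_succ_top (by omega), ih (by omega), descFactorial_succ,
      Nat.cast_mul, Nat.cast_sub (by omega), Nat.cast_sub (by omega)]
    push_cast
    ring

lemma factorial_div_factorial_add_eq_inv_descFactorial (j m : ℕ) :
    (j ! : ℝ) / (j + m)! = ((j + m).descFactorial m : ℝ)⁻¹ := by
  have h := factorial_mul_descFactorial (Nat.le_add_left m j)
  rw [Nat.add_sub_cancel] at h
  rw [← h, Nat.cast_mul, div_mul_eq_div_div, div_self (by positivity), one_div]

lemma factorial_div_factorial_add_le_inv_prod {j m J : ℕ} (hJ : m < J) (hj : J ≤ j + m + 1) :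
    (j ! : ℝ) / (j + m)! ≤ (∏ k ∈ Icc 1 m, ((J : ℝ) - k))⁻¹ := by
  rw [prod_Icc_sub_eq_descFactorial hJ.le, factorial_div_factorial_add_eq_inv_descFactorial]
  have hpos : 0 < (J - 1).descFactorial m := descFactorial_pos.mpr (by omega)
  gcongr
  omega

lemma factorial_div_mul_factorial_div_le {a b m J : ℕ} (hJ : m < J) (hab : 2 * J ≤ a + b + m) :
    (a ! : ℝ) / (a + m)! * ((b ! : ℝ) / (b + m)!) ≤
      ((a ! : ℝ) / (a + m)! + (b ! : ℝ) / (b + m)!) / ∏ k ∈ Icc 1 m, ((J : ℝ) - k) := by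
  have ha : 0 ≤ (a ! : ℝ) / (a + m)! := by positivity
  have hb : 0 ≤ (b ! : ℝ) / (b + m)! := by positivity
  have hP : 0 ≤ (∏ k ∈ Icc 1 m, ((J : ℝ) - k))⁻¹ := by
    rw [prod_Icc_sub_eq_descFactorial hJ.le]; positivity
  rw [div_eq_mul_inv (_ + _), add_mul]
  rcases le_total J (b + m + 1) with hbJ | haJ
  · nlinarith [factorial_div_factorial_add_le_inv_prod hJ hbJ]
  · nlinarith [factorial_div_factorial_add_le_inv_prod hJ (show J ≤ a + m + 1 by omega)]

lemma mul_factorial_div_factorial_add_succ_eq_sub (i m : ℕ) :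
    (m : ℝ) * ((i ! : ℝ) / (i + (m + 1))!) =
      (i ! : ℝ) / (i + m)! - ((i + 1)! : ℝ) / (i + 1 + m)! := by
  rw [show i + (m + 1) = i + m + 1 by omega, show i + 1 + m = i + m + 1 by omega,
    factorial_succ (i + m), factorial_succ i]
  push_cast
  field_simp
  ring

lemma sum_range_factorial_div_factorial_add_le {m : ℕ} (hm : 2 ≤ m) (N : ℕ) :
    ∑ i ∈ range N, (i ! : ℝ) / (i + m)! ≤ 1 / (((m : ℝ) - 1) * (m - 1)!) := by
  obtain ⟨n, rfl⟩ : ∃ n, m = n + 1 + 1 := ⟨m - 2, by omega⟩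
  have htelescope : ((n + 1 : ℕ) : ℝ) * ∑ i ∈ range N, (i ! : ℝ) / (i + (n + 1 + 1))! =
      1 / (n + 1)! - (N ! : ℝ) / (N + (n + 1))! := by
    rw [mul_sum]
    simp_rw [mul_factorial_div_factorial_add_succ_eq_sub]
    rw [sum_range_sub' (fun i => (i ! : ℝ) / (i + (n + 1))!)]
    simp
  have htail : (0 : ℝ) ≤ (N ! : ℝ) / (N + (n + 1))! := by positivity
  rw [show ((n + 1 + 1 : ℕ) : ℝ) - 1 = ((n + 1 : ℕ) : ℝ) by push_cast; ring,
    Nat.add_sub_cancel, mul_comm, ← div_div, le_div_iff₀ (by positivity), mul_comm]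
  linarith

/-- For `m ≥ 2` and `J ≥ m+1`:
`∑_{i=0}^{2J-m} (2J-m-i)! i! / ((2J-i)! (i+m)!) ≤ 2/((m-1)(m-1)! (J-1)(J-2)⋯(J-m))`. -/
theorem stmt13 (m J : ℕ) (hm : 2 ≤ m) (hJ : m + 1 ≤ J) :
    ∑ i ∈ Finset.range (2 * J - m + 1),
        (Nat.factorial (2 * J - m - i) : ℝ) * (Nat.factorial i) /
          ((Nat.factorial (2 * J - i) : ℝ) * (Nat.factorial (i + m))) ≤
      2 / (((m : ℝ) - 1) * (Nat.factorial (m - 1) : ℝ) *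
        ∏ k ∈ Finset.Icc 1 m, ((J : ℝ) - k)) := by
  have hP : 0 < ∏ k ∈ Icc 1 m, ((J : ℝ) - k) := by
    rw [prod_Icc_sub_eq_descFactorial (by omega)]
    exact_mod_cast descFactorial_pos.mpr (by omega)
  set n := 2 * J - m
  set P := ∏ k ∈ Icc 1 m, ((J : ℝ) - k)
  calc _ = ∑ i ∈ range (n + 1), ((n - i)! : ℝ) / (n - i + m)! * ((i ! : ℝ) / (i + m)!) := by
        refine sum_congr rfl fun i hi => ?_
        rw [mem_range] at hi
        rw [show 2 * J - i = n - i + m by omega, mul_div_mul_comm]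
    _ ≤ ∑ i ∈ range (n + 1), (((n - i)! : ℝ) / (n - i + m)! + (i ! : ℝ) / (i + m)!) / P :=
        sum_le_sum fun i hi =>
          factorial_div_mul_factorial_div_le (by omega) (by rw [mem_range] at hi; omega)
    _ = 2 * (∑ i ∈ range (n + 1), (i ! : ℝ) / (i + m)!) / P := by
        rw [← sum_div, sum_add_distrib,
          ← sum_range_reflect (fun i => (i ! : ℝ) / (i + m)!) (n + 1)]
        simp only [Nat.add_sub_cancel]
        ring
    _ ≤ 2 * (1 / (((m : ℝ) - 1) * (m - 1)!)) / P := by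
        gcongr
        exact sum_range_factorial_div_factorial_add_le hm _
    _ = _ := by rw [mul_one_div, div_div]
end

section
/- Let N ≥ 1, let A and B be Hermitian N × N complex matrices all of whose eigenvalues lie in an interval [a, b], let 0 < α ≤ 1, and let φ : [a, b] → ℝ satisfy |φ(x) − φ(y)| ≤ H·|x − y|^α for all x, y ∈ [a, b]. Then |Tr φ(A) − Tr φ(B)| ≤ H · ‖A − B‖₁^α · N^{1−α}, where Tr φ(A) = ∑_{i=1}^{N} φ(λ_i(A)) with λ_i(A) the eigenvalues of A (counted with multiplicity), and ‖A − B‖₁ is the trace norm of A − B, i.e. the sum of the absolute values of the eigenvalues of the Hermitian matrix A − B. -/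
/-!
Pair the eigenvalues of `A` and `B` in decreasing order. Hölder continuity bounds the left-hand
side by `H ∑ₖ |λₖ(A) - λₖ(B)|^α`, concavity of `t ↦ t^α` bounds this sum by
`(∑ₖ |λₖ(A) - λₖ(B)|)^α N^(1-α)`, and Lidskii's inequality
`∑ₖ |λₖ(A) - λₖ(B)| ≤ ‖A - B‖₁` finishes the proof. For Lidskii, write `A - B = P - Q` with
`P, Q ≥ 0` and `tr P + tr Q = ‖A - B‖₁`; then `D = B + P = A + Q` dominates both `A` and `B`, so by
Weyl monotonicity (a Courant–Fischer dimension count) `|λₖ(A) - λₖ(B)| ≤ (λₖ(D) - λₖ(A)) +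
(λₖ(D) - λₖ(B))`, and these sum to `tr Q + tr P`.
-/

open Module Submodule RCLike
open scoped InnerProductSpace

namespace OrthonormalBasis

variable {ι 𝕜 E : Type*} [Fintype ι] [RCLike 𝕜] [NormedAddCommGroup E] [InnerProductSpace 𝕜 E]

lemma repr_apply_eq_zero_of_mem_span (b : OrthonormalBasis ι 𝕜 E) {s : Set ι} {x : E}
    (hx : x ∈ span 𝕜 (b '' s)) {i : ι} (hi : i ∉ s) : b.repr x i = 0 := by
  rw [← b.coe_toBasis, Basis.mem_span_image] at hx
  rw [← b.coe_toBasis_repr_apply]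
  by_contra h
  exact hi (hx (Finsupp.mem_support_iff.mpr h))

lemma finrank_span_image (b : OrthonormalBasis ι 𝕜 E) (s : Finset ι) :
    finrank 𝕜 (span 𝕜 (b '' s)) = s.card := by
  rw [Set.image_eq_range]
  exact (finrank_span_eq_card (b.orthonormal.linearIndependent.comp _ Subtype.val_injective)).trans
    (Fintype.card_coe s)

lemma norm_sq_eq_sum_norm_sq_repr (b : OrthonormalBasis ι 𝕜 E) (x : E) :
    ‖x‖ ^ 2 = ∑ i, ‖b.repr x i‖ ^ 2 := by
  rw [← b.repr.norm_map, EuclideanSpace.norm_sq_eq]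

end OrthonormalBasis

namespace LinearMap.IsSymmetric

variable {𝕜 E : Type*} [RCLike 𝕜] [NormedAddCommGroup E] [InnerProductSpace 𝕜 E]
  [FiniteDimensional 𝕜 E] {T S : E →ₗ[𝕜] E} {n : ℕ} (hT : T.IsSymmetric) (hn : finrank 𝕜 E = n)
include hT

lemma re_inner_apply_self_eq_sum (x : E) :
    re ⟪T x, x⟫_𝕜 = ∑ i, hT.eigenvalues hn i * ‖(hT.eigenvectorBasis hn).repr x i‖ ^ 2 := by
  rw [← (hT.eigenvectorBasis hn).repr.inner_map_map, PiLp.inner_apply, map_sum]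
  refine Finset.sum_congr rfl fun i _ => ?_
  rw [eigenvectorBasis_apply_self_apply, inner_apply, map_mul (starRingEnd 𝕜), conj_ofReal,
    mul_left_comm, mul_conj, ← ofReal_pow, ← ofReal_mul, ofReal_re]

lemma eigenvalues_mul_norm_sq_le_re_inner {k : Fin n} {x : E}
    (hx : x ∈ span 𝕜 (hT.eigenvectorBasis hn '' Set.Iic k)) :
    hT.eigenvalues hn k * ‖x‖ ^ 2 ≤ re ⟪T x, x⟫_𝕜 := by
  rw [hT.re_inner_apply_self_eq_sum hn, (hT.eigenvectorBasis hn).norm_sq_eq_sum_norm_sq_repr,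
    Finset.mul_sum]
  refine Finset.sum_le_sum fun i _ => ?_
  by_cases hi : i ∈ Set.Iic k
  · exact mul_le_mul_of_nonneg_right (hT.eigenvalues_antitone hn hi) (sq_nonneg _)
  · simp [(hT.eigenvectorBasis hn).repr_apply_eq_zero_of_mem_span hx hi]

lemma re_inner_le_eigenvalues_mul_norm_sq {k : Fin n} {x : E}
    (hx : x ∈ span 𝕜 (hT.eigenvectorBasis hn '' Set.Ici k)) :
    re ⟪T x, x⟫_𝕜 ≤ hT.eigenvalues hn k * ‖x‖ ^ 2 := by
  rw [hT.re_inner_apply_self_eq_sum hn, (hT.eigenvectorBasis hn).norm_sq_eq_sum_norm_sq_repr,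
    Finset.mul_sum]
  refine Finset.sum_le_sum fun i _ => ?_
  by_cases hi : i ∈ Set.Ici k
  · exact mul_le_mul_of_nonneg_right (hT.eigenvalues_antitone hn hi) (sq_nonneg _)
  · simp [(hT.eigenvectorBasis hn).repr_apply_eq_zero_of_mem_span hx hi]

theorem eigenvalues_mono (hS : S.IsSymmetric) (hTS : T ≤ S) :
    hT.eigenvalues hn ≤ hS.eigenvalues hn := by
  intro k
  set U := span 𝕜 (hT.eigenvectorBasis hn '' (Finset.Iic k : Set (Fin n)))
  set W := span 𝕜 (hS.eigenvectorBasis hn '' (Finset.Ici k : Set (Fin n)))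
  have hdim : finrank 𝕜 E < finrank 𝕜 U + finrank 𝕜 W := by
    rw [OrthonormalBasis.finrank_span_image, OrthonormalBasis.finrank_span_image, Fin.card_Iic,
      Fin.card_Ici, hn]
    omega
  obtain ⟨x, hxU, hxW, hx⟩ : ∃ x ∈ U, x ∈ W ∧ x ≠ 0 := by
    by_contra! h
    exact hdim.not_ge (finrank_add_finrank_le_of_disjoint (disjoint_def.mpr h))
  have hquad : re ⟪T x, x⟫_𝕜 ≤ re ⟪S x, x⟫_𝕜 := by
    simpa [inner_sub_left] using hTS.re_inner_nonneg_left x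
  refine le_of_mul_le_mul_right ?_ (by positivity : 0 < ‖x‖ ^ 2)
  exact (hT.eigenvalues_mul_norm_sq_le_re_inner hn (Finset.coe_Iic k ▸ hxU)).trans
    (hquad.trans (hS.re_inner_le_eigenvalues_mul_norm_sq hn (Finset.coe_Ici k ▸ hxW)))

end LinearMap.IsSymmetric

open Finset in
lemma Real.sum_rpow_le_rpow_sum_mul_card_rpow {ι : Type*} (s : Finset ι) {f : ι → ℝ}
    (hf : ∀ i ∈ s, 0 ≤ f i) {α : ℝ} (hα0 : 0 < α) (hα1 : α ≤ 1) :
    ∑ i ∈ s, f i ^ α ≤ (∑ i ∈ s, f i) ^ α * (#s : ℝ) ^ (1 - α) := by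
  have hpow : ∀ i ∈ s, (f i ^ α) ^ α⁻¹ = f i := fun i hi =>
    Real.rpow_rpow_inv (hf i hi) hα0.ne'
  have hsum : 0 ≤ ∑ i ∈ s, f i ^ α := sum_nonneg fun i hi => Real.rpow_nonneg (hf i hi) α
  have hmean := Real.rpow_sum_le_const_mul_sum_rpow_of_nonneg s (one_le_inv_iff₀.mpr ⟨hα0, hα1⟩)
    (fun i hi => Real.rpow_nonneg (hf i hi) α)
  rw [sum_congr rfl hpow] at hmean
  calc ∑ i ∈ s, f i ^ α = ((∑ i ∈ s, f i ^ α) ^ α⁻¹) ^ α :=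
        (Real.rpow_inv_rpow hsum hα0.ne').symm
    _ ≤ ((#s : ℝ) ^ (α⁻¹ - 1) * ∑ i ∈ s, f i) ^ α := by gcongr
    _ = (∑ i ∈ s, f i) ^ α * (#s : ℝ) ^ (1 - α) := by
        rw [Real.mul_rpow (by positivity) (sum_nonneg hf), ← Real.rpow_mul (by positivity),
          sub_mul, inv_mul_cancel₀ hα0.ne', one_mul, mul_comm]

namespace Matrix.IsHermitian

open scoped MatrixOrder ComplexOrder

variable {𝕜 n : Type*} [RCLike 𝕜] [Fintype n] [DecidableEq n] {A B C : Matrix n n 𝕜}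

/- `eigenvalues` is the decreasing sequence `eigenvalues₀` relabelled by a bijection
`n ≃ Fin (card n)` that does not depend on the matrix, so equal indices of two matrices refer to
the same position in the decreasing order. -/
theorem eigenvalues_mono (hA : A.IsHermitian) (hB : B.IsHermitian) (hAB : A ≤ B) :
    hA.eigenvalues ≤ hB.eigenvalues := fun _ =>
  LinearMap.IsSymmetric.eigenvalues_mono _ _ _
    (by rwa [LinearMap.le_def, ← map_sub, isPositive_toEuclideanLin_iff]) _

lemma re_trace_eq_sum_eigenvalues (hA : A.IsHermitian) : re A.trace = ∑ i, hA.eigenvalues i := by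
  simp [hA.trace_eq_sum_eigenvalues]

lemma trace_cfc (hA : A.IsHermitian) (f : ℝ → ℝ) :
    (cfc f A).trace = ∑ i, (f (hA.eigenvalues i) : 𝕜) := by
  rw [cfc_eq hA f, IsHermitian.cfc, Unitary.conjStarAlgAut_apply, trace_mul_cycle,
    Unitary.coe_star_mul_self, one_mul, trace_diagonal]
  rfl

lemma exists_nonneg_sub_eq_and_re_trace_add_eq_sum_abs (hC : C.IsHermitian) :
    ∃ P Q : Matrix n n 𝕜, 0 ≤ P ∧ 0 ≤ Q ∧ P - Q = C ∧
      re (P.trace + Q.trace) = ∑ i, |hC.eigenvalues i| := by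
  refine ⟨cfc (fun x : ℝ => max x 0) C, cfc (fun x : ℝ => max (-x) 0) C,
    cfc_nonneg fun x _ => le_max_right _ _, cfc_nonneg fun x _ => le_max_right _ _, ?_, ?_⟩
  · rw [← cfc_sub _ _ C]
    simp_rw [max_zero_sub_max_neg_zero_eq_self]
    exact cfc_id' ℝ C
  · rw [hC.trace_cfc, hC.trace_cfc, ← Finset.sum_add_distrib, map_sum]
    refine Finset.sum_congr rfl fun i _ => ?_
    rw [← ofReal_add, ofReal_re, max_zero_add_max_neg_zero_eq_abs_self]

theorem sum_abs_eigenvalues_sub_le (hA : A.IsHermitian) (hB : B.IsHermitian)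
    (hAB : (A - B).IsHermitian) :
    ∑ i, |hA.eigenvalues i - hB.eigenvalues i| ≤ ∑ i, |hAB.eigenvalues i| := by
  obtain ⟨P, Q, hP, hQ, hPQ, htrace⟩ := hAB.exists_nonneg_sub_eq_and_re_trace_add_eq_sum_abs
  have hD : (B + P).IsHermitian := hB.add (nonneg_iff_posSemidef.mp hP).isHermitian
  have hDA : B + P = A + Q := by
    rw [sub_eq_iff_eq_add'.mp hPQ]; abel
  have hAD := hA.eigenvalues_mono hD (hDA ▸ le_add_of_nonneg_right hQ)
  have hBD := hB.eigenvalues_mono hD (le_add_of_nonneg_right hP)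
  calc ∑ i, |hA.eigenvalues i - hB.eigenvalues i|
      ≤ ∑ i, ((hD.eigenvalues i - hA.eigenvalues i) + (hD.eigenvalues i - hB.eigenvalues i)) :=
        Finset.sum_le_sum fun i _ =>
          abs_sub_le_iff.mpr ⟨by linarith [hAD i, hBD i], by linarith [hAD i, hBD i]⟩
    _ = re (A + Q).trace - re A.trace + (re (B + P).trace - re B.trace) := by
        simp only [Finset.sum_add_distrib, Finset.sum_sub_distrib, ← re_trace_eq_sum_eigenvalues,
          hDA]
    _ = ∑ i, |hAB.eigenvalues i| := by
        rw [← htrace, trace_add, trace_add, map_add, map_add, map_add]; ring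

lemma eq_of_eigenvalues_mem_of_subsingleton (hA : A.IsHermitian) (hB : B.IsHermitian) {s : Set ℝ}
    (hs : s.Subsingleton) (hAs : ∀ i, hA.eigenvalues i ∈ s) (hBs : ∀ i, hB.eigenvalues i ∈ s) :
    A = B := by
  rcases isEmpty_or_nonempty n with hn | hn
  · exact Subsingleton.elim A B
  obtain ⟨i₀⟩ := hn
  have key : ∀ M : Matrix n n 𝕜, ∀ hM : M.IsHermitian, (∀ i, hM.eigenvalues i ∈ s) →
      M = algebraMap ℝ _ (hA.eigenvalues i₀) := fun M hM hMs =>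
    CFC.eq_algebraMap_of_spectrum_subset_singleton M _ (by
      rw [hM.spectrum_real_eq_range_eigenvalues]
      rintro _ ⟨i, rfl⟩
      exact hs (hMs i) (hAs i₀)) hM.isSelfAdjoint
  rw [key A hA hAs, key B hB hBs]

end Matrix.IsHermitian

lemma Set.Subsingleton.of_abs_sub_le_mul_rpow {s : Set ℝ} {φ : ℝ → ℝ} {H α : ℝ} (hH : H < 0)
    (hφ : ∀ x ∈ s, ∀ y ∈ s, |φ x - φ y| ≤ H * |x - y| ^ α) : s.Subsingleton := by
  intro x hx y hy
  by_contra hxy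
  have hpos : 0 < |x - y| ^ α := Real.rpow_pos_of_pos (abs_pos.mpr (sub_ne_zero.mpr hxy)) α
  linarith [hφ x hx y hy, abs_nonneg (φ x - φ y), mul_neg_of_neg_of_pos hH hpos]

theorem stmt18_general (N : ℕ) (A B : Matrix (Fin N) (Fin N) ℂ)
    (hA : A.IsHermitian) (hB : B.IsHermitian) (hAB : (A - B).IsHermitian)
    (a b : ℝ)
    (hAspec : ∀ i, hA.eigenvalues i ∈ Set.Icc a b)
    (hBspec : ∀ i, hB.eigenvalues i ∈ Set.Icc a b)
    (α : ℝ) (hα0 : 0 < α) (hα1 : α ≤ 1)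
    (φ : ℝ → ℝ) (H : ℝ)
    (hφ : ∀ x ∈ Set.Icc a b, ∀ y ∈ Set.Icc a b, |φ x - φ y| ≤ H * |x - y| ^ α) :
    |(∑ i, φ (hA.eigenvalues i)) - ∑ i, φ (hB.eigenvalues i)| ≤
      H * (∑ i, |hAB.eigenvalues i|) ^ α * (N : ℝ) ^ (1 - α) := by
  rcases lt_or_ge H 0 with hH | hH
  · obtain rfl := hA.eq_of_eigenvalues_mem_of_subsingleton hB
      (Set.Subsingleton.of_abs_sub_le_mul_rpow hH hφ) hAspec hBspec
    have hzero : hAB.eigenvalues = 0 := hAB.eigenvalues_eq_zero_iff.mpr (sub_self A)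
    rw [hzero]
    simp [hα0.ne']
  calc |(∑ i, φ (hA.eigenvalues i)) - ∑ i, φ (hB.eigenvalues i)|
      ≤ ∑ i, H * |hA.eigenvalues i - hB.eigenvalues i| ^ α := by
        rw [← Finset.sum_sub_distrib]
        exact (Finset.abs_sum_le_sum_abs _ _).trans
          (Finset.sum_le_sum fun i _ => hφ _ (hAspec i) _ (hBspec i))
    _ ≤ H * ((∑ i, |hA.eigenvalues i - hB.eigenvalues i|) ^ α * (N : ℝ) ^ (1 - α)) := by
        rw [← Finset.mul_sum]
        gcongr
        simpa using Real.sum_rpow_le_rpow_sum_mul_card_rpow Finset.univ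
          (fun i _ => abs_nonneg (hA.eigenvalues i - hB.eigenvalues i)) hα0 hα1
    _ ≤ H * ((∑ i, |hAB.eigenvalues i|) ^ α * (N : ℝ) ^ (1 - α)) := by
        gcongr H * (?_ ^ α * _)
        exact hA.sum_abs_eigenvalues_sub_le hB hAB
    _ = H * (∑ i, |hAB.eigenvalues i|) ^ α * (N : ℝ) ^ (1 - α) := by ring

/-- Trace bound for Hölder functions of Hermitian matrices:
if `A, B` are Hermitian `N × N` matrices with spectra in `[a,b]` and `φ` is `α`-Hölder
with constant `H` on `[a,b]`, then
`|Tr φ(A) - Tr φ(B)| ≤ H ‖A - B‖₁^α N^{1-α}`, where traces of `φ` are sums of `φ` over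
eigenvalues and `‖A - B‖₁` is the sum of the absolute values of the eigenvalues of `A - B`. -/
theorem stmt18 (N : ℕ) (hN : 1 ≤ N) (A B : Matrix (Fin N) (Fin N) ℂ)
    (hA : A.IsHermitian) (hB : B.IsHermitian) (hAB : (A - B).IsHermitian)
    (a b : ℝ)
    (hAspec : ∀ i, hA.eigenvalues i ∈ Set.Icc a b)
    (hBspec : ∀ i, hB.eigenvalues i ∈ Set.Icc a b)
    (α : ℝ) (hα0 : 0 < α) (hα1 : α ≤ 1)
    (φ : ℝ → ℝ) (H : ℝ)
    (hφ : ∀ x ∈ Set.Icc a b, ∀ y ∈ Set.Icc a b, |φ x - φ y| ≤ H * |x - y| ^ α) :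
    |(∑ i, φ (hA.eigenvalues i)) - ∑ i, φ (hB.eigenvalues i)| ≤
      H * (∑ i, |hAB.eigenvalues i|) ^ α * (N : ℝ) ^ (1 - α) :=
  stmt18_general N A B hA hB hAB a b hAspec hBspec α hα0 hα1 φ H hφ
end

section
/- Let φ(x) = x·log x for x > 0 and φ(0) = 0, and let α ∈ (0, 1). Then for all real 0 ≤ x ≤ y ≤ 1/e: |φ(y) − φ(x)| ≤ (y − x)^α / (α(1 − α)). -/
/-!
Write `φ(t) = t log t` and `h = y - x`. On `[0, e⁻¹]` the function `φ` is decreasing, so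
`|φ(y) - φ(x)| = φ(x) - φ(y)`. Superadditivity of `φ` on `[0, ∞)` gives
`φ(x) + φ(h) ≤ φ(y)`, hence `|φ(y) - φ(x)| ≤ -φ(h)`, and `-log h ≤ h^(α-1) / (1 - α)` turns
this into `h^α / (1 - α)`.
-/

open Real

namespace Real

lemma mul_log_le_mul_log_of_le {a c : ℝ} (ha : 0 ≤ a) (hac : a ≤ c) :
    a * log a ≤ a * log c := by
  rcases ha.eq_or_lt with rfl | ha
  · simp
  · exact mul_le_mul_of_nonneg_left (log_le_log ha hac) ha.le

lemma mul_log_add_mul_log_le {a b : ℝ} (ha : 0 ≤ a) (hb : 0 ≤ b) :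
    a * log a + b * log b ≤ (a + b) * log (a + b) :=
  calc a * log a + b * log b ≤ a * log (a + b) + b * log (a + b) :=
        add_le_add (mul_log_le_mul_log_of_le ha (by linarith))
          (mul_log_le_mul_log_of_le hb (by linarith))
    _ = (a + b) * log (a + b) := by ring

lemma neg_mul_log_le_rpow_div {h α : ℝ} (hh : 0 ≤ h) (hα : α < 1) :
    -(h * log h) ≤ h ^ α / (1 - α) := by
  rcases hh.eq_or_lt with rfl | hh
  · simpa using div_nonneg (rpow_nonneg le_rfl α) (sub_nonneg.2 hα.le)
  have hlog : -log h ≤ h ^ (α - 1) / (1 - α) := by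
    have := log_le_rpow_div (inv_nonneg.2 hh.le) (sub_pos.2 hα)
    rwa [log_inv, inv_rpow hh.le, ← rpow_neg hh.le, neg_sub] at this
  calc -(h * log h) = h * -log h := by ring
    _ ≤ h * (h ^ (α - 1) / (1 - α)) := mul_le_mul_of_nonneg_left hlog hh.le
    _ = h ^ α / (1 - α) := by rw [rpow_sub_one hh.ne']; field_simp

lemma abs_mul_log_sub_mul_log_le {x y : ℝ} (hx : 0 ≤ x) (hxy : x ≤ y) (hy : y ≤ exp (-1)) :
    |y * log y - x * log x| ≤ -((y - x) * log (y - x)) := by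
  have hφ : y * log y ≤ x * log x :=
    mul_log_strictAntiOn.antitoneOn ⟨hx, hxy.trans hy⟩ ⟨hx.trans hxy, hy⟩ hxy
  have hsuper := mul_log_add_mul_log_le hx (sub_nonneg.2 hxy)
  rw [add_sub_cancel] at hsuper
  rw [abs_of_nonpos (sub_nonpos.2 hφ)]
  linarith

end Real

/-- For `φ(x) = x log x` (with `φ(0) = 0`), `α ∈ (0,1)` and `0 ≤ x ≤ y ≤ 1/e`:
`|φ(y) - φ(x)| ≤ (y - x)^α / (α (1 - α))`. -/
theorem stmt19 (α : ℝ) (hα : α ∈ Set.Ioo (0 : ℝ) 1) (x y : ℝ)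
    (hx : 0 ≤ x) (hxy : x ≤ y) (hy : y ≤ 1 / Real.exp 1) :
    |y * Real.log y - x * Real.log x| ≤ (y - x) ^ α / (α * (1 - α)) := by
  obtain ⟨hα₀, hα₁⟩ := hα
  rw [one_div, ← exp_neg] at hy
  calc |y * log y - x * log x| ≤ -((y - x) * log (y - x)) :=
        abs_mul_log_sub_mul_log_le hx hxy hy
    _ ≤ (y - x) ^ α / (1 - α) := neg_mul_log_le_rpow_div (sub_nonneg.2 hxy) hα₁
    _ ≤ (y - x) ^ α / (α * (1 - α)) :=
        div_le_div_of_nonneg_left (rpow_nonneg (sub_nonneg.2 hxy) α) (by nlinarith)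
          (by nlinarith)
end
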